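/- With m ambiguous events among n total events (ambiguous events doubling the derivation count, others leaving it unchanged, starting from 1), the total number of parsing calls ∑_{i=1}^{n} f(i-1) is at most (n − m)·2^m + (2^m − 1), and this bound is achieved when all m ambiguous events occur first. -/

import Mathlib

/-! After `i` events the derivation count is `2 ^ c`, where `c` is the number of ambiguous ones
among them; since `c ≤ min i m`, the work is at most `∑_{i<n} 2 ^ min i m`, which is the
stated bound and is exactly the work when the ambiguous events come first. -/

open Finset

theorem sum_Icc_one_comp_sub_one {M : Type*} [AddCommMonoid M] (f : ℕ → M) (n : ℕ) :
    ∑ i ∈ Icc 1 n, f (i - 1) = ∑ i ∈ range n, f i := by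
  rw [← Ico_add_one_right_eq_Icc, sum_Ico_eq_sum_range]
  simp

theorem sum_range_comp_min {M : Type*} [AddCommMonoid M] (g : ℕ → M) {m n : ℕ} (hmn : m ≤ n) :
    ∑ i ∈ range n, g (min i m) = ∑ i ∈ range m, g i + (n - m) • g m := by
  obtain ⟨k, rfl⟩ := Nat.exists_eq_add_of_le hmn
  rw [sum_range_add, Nat.add_sub_cancel_left]
  congr 1
  · exact sum_congr rfl fun i hi => by rw [min_eq_left (mem_range.1 hi).le]
  · simp

namespace Nat

variable {p : ℕ → Prop} [DecidablePred p] {n : ℕ}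

theorem eq_pow_count_mul_of_step {M : Type*} [Monoid M] {f : ℕ → M} {b : M}
    (hp : ∀ i < n, p i → f (i + 1) = b * f i) (hnp : ∀ i < n, ¬ p i → f (i + 1) = f i) :
    ∀ i ≤ n, f i = b ^ count p i * f 0
  | 0, _ => by simp
  | i + 1, hi => by
    have ih := eq_pow_count_mul_of_step hp hnp i (by omega)
    by_cases h : p i
    · rw [hp i hi h, ih, count_succ, if_pos h, _root_.pow_succ', mul_assoc]
    · rw [hnp i hi h, ih, count_succ, if_neg h, add_zero]

theorem count_eq_min_of_iff_lt {m : ℕ} (h : ∀ i < n, p i ↔ i < m) :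
    ∀ i ≤ n, count p i = min i m
  | 0, _ => by simp
  | i + 1, hi => by
    have ih := count_eq_min_of_iff_lt h i (by omega)
    rw [count_succ, ih]
    by_cases him : i < m
    · rw [if_pos ((h i hi).2 him)]; omega
    · rw [if_neg (mt (h i hi).1 him)]; omega

end Nat

theorem work_bound_amb_general (f : ℕ → ℕ) (amb : ℕ → Prop)
    [DecidablePred amb] (n m : ℕ)
    (h0 : f 0 = 1)
    (hamb : ∀ i < n, amb i → f (i + 1) = 2 * f i)
    (hnamb : ∀ i < n, ¬ amb i → f (i + 1) = f i)
    (hm : ((Finset.range n).filter amb).card = m) :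
    (∑ i ∈ Finset.Icc 1 n, f (i - 1)) ≤ (n - m) * 2 ^ m + (2 ^ m - 1) ∧
    ((∀ i < n, (amb i ↔ i < m)) →
      (∑ i ∈ Finset.Icc 1 n, f (i - 1)) = (n - m) * 2 ^ m + (2 ^ m - 1)) := by
  rw [← Nat.count_eq_card_filter_range] at hm
  have hmn : m ≤ n := hm ▸ Nat.count_le amb
  have hwork : ∑ i ∈ Icc 1 n, f (i - 1) = ∑ i ∈ range n, 2 ^ Nat.count amb i := by
    rw [sum_Icc_one_comp_sub_one]
    refine sum_congr rfl fun i hi => ?_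
    simpa [h0] using Nat.eq_pow_count_mul_of_step hamb hnamb i (mem_range.1 hi).le
  have hfirst : ∑ i ∈ range n, 2 ^ min i m = (n - m) * 2 ^ m + (2 ^ m - 1) := by
    rw [sum_range_comp_min (2 ^ ·) hmn, Nat.geomSum_eq le_rfl, smul_eq_mul]
    simp [add_comm]
  rw [hwork, ← hfirst]
  refine ⟨sum_le_sum fun i hi => ?_, fun hamb_first => sum_congr rfl fun i hi => ?_⟩
  · exact Nat.pow_le_pow_right two_pos
      (le_min (Nat.count_le amb) (hm ▸ Nat.count_monotone amb (mem_range.1 hi).le))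
  · rw [Nat.count_eq_min_of_iff_lt hamb_first i (mem_range.1 hi).le]

/-- With `m` ambiguous events among `n` (ambiguous events double the derivation
count, others preserve it, starting from 1), the total work
`∑_{i=1}^{n} f (i-1)` is at most `(n − m)·2^m + (2^m − 1)`, and this bound is
attained when the `m` ambiguous events come first. -/
theorem work_bound_amb (f : ℕ → ℕ) (amb : ℕ → Prop)
    [DecidablePred amb] (n m : ℕ) (hmn : m ≤ n)
    (h0 : f 0 = 1)
    (hamb : ∀ i < n, amb i → f (i + 1) = 2 * f i)
    (hnamb : ∀ i < n, ¬ amb i → f (i + 1) = f i)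
    (hm : ((Finset.range n).filter amb).card = m) :
    (∑ i ∈ Finset.Icc 1 n, f (i - 1)) ≤ (n - m) * 2 ^ m + (2 ^ m - 1) ∧
    ((∀ i < n, (amb i ↔ i < m)) →
      (∑ i ∈ Finset.Icc 1 n, f (i - 1)) = (n - m) * 2 ^ m + (2 ^ m - 1)) :=
  work_bound_amb_general f amb n m h0 hamb hnamb hm
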